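/- arXiv:1806.01770 — 2 statements merged into one kernel-verified Lean document; each statement's English description precedes it below -/
import Mathlib

section
/- For nonnegative Radon measures μ₁, μ₂ on ℝ_+ with nonzero total masses M₁ = μ₁(ℝ_+), M₂ = μ₂(ℝ_+), define ρ(μ₁,μ₂) = min(M₁,M₂)·W₁(μ₁/M₁, μ₂/M₂) + |M₁ − M₂|, where W₁ is the 1-Wasserstein distance. If K is a bounded interval containing the supports of μ₁ and μ₂, then with C_K = (1/3)·min{1, 2/|K|} one has C_K ρ(μ₁,μ₂) ≤ d₁(μ₁,μ₂) ≤ ρ(μ₁,μ₂), where d₁ is the flat metric. -/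
/-!
Write `μᵢ = Mᵢ • νᵢ` with `νᵢ` probability measures. For any test function `f`, the difference
`M₁ ∫ f dν₁ - M₂ ∫ f dν₂` is `min M₁ M₂ (∫ f dν₁ - ∫ f dν₂)` plus `(M₁ - M₂)` times one of the
`∫ f dνᵢ`. For `|f| ≤ 1` this gives `d₁ ≤ ρ`. Conversely, for a 1-Lipschitz `f` let `m` be the
midpoint of `K`. If `c ≤ 1` and `c |K| / 2 ≤ 1`, clamping `c (f - f m)` to `[-1, 1]` yields a flat
test function that is unclamped on `K`, while `|∫ f dνᵢ - f m| ≤ |K| / 2`; hence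
`c min M₁ M₂ W₁(ν₁, ν₂) ≤ d₁ + |M₁ - M₂|`. Testing against `±1` gives `|M₁ - M₂| ≤ d₁`, whence
`c ρ ≤ 3 d₁`.
-/

open MeasureTheory

/-- The flat (bounded Lipschitz) metric on nonnegative measures. -/
noncomputable def flatDist {X : Type*} [MeasurableSpace X] [PseudoMetricSpace X]
    (μ ν : Measure X) : ℝ :=
  ⨆ φ : {f : X → ℝ // LipschitzWith 1 f ∧ ∀ x, |f x| ≤ 1},
    (∫ x, φ.1 x ∂μ - ∫ x, φ.1 x ∂ν)

/-- The 1-Wasserstein distance via Kantorovich–Rubinstein duality. -/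
noncomputable def W1 {X : Type*} [MeasurableSpace X] [PseudoMetricSpace X]
    (μ ν : Measure X) : ℝ :=
  ⨆ φ : {f : X → ℝ // LipschitzWith 1 f},
    (∫ x, φ.1 x ∂μ - ∫ x, φ.1 x ∂ν)

open Set Metric

lemma abs_mul_sub_mul_sub_min_mul_le (M₁ M₂ : ℝ) {x₁ x₂ r : ℝ} (h₁ : |x₁| ≤ r) (h₂ : |x₂| ≤ r) :
    |M₁ * x₁ - M₂ * x₂ - min M₁ M₂ * (x₁ - x₂)| ≤ |M₁ - M₂| * r := by
  rcases le_total M₁ M₂ with h | h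
  · rw [min_eq_left h, show M₁ * x₁ - M₂ * x₂ - M₁ * (x₁ - x₂) = (M₁ - M₂) * x₂ by ring, abs_mul]
    exact mul_le_mul_of_nonneg_left h₂ (abs_nonneg _)
  · rw [min_eq_right h, show M₁ * x₁ - M₂ * x₂ - M₂ * (x₁ - x₂) = (M₁ - M₂) * x₁ by ring,
      abs_mul]
    exact mul_le_mul_of_nonneg_left h₁ (abs_nonneg _)

lemma min_one_inv_mul_le_one {R : ℝ} (hR : 0 ≤ R) : min 1 R⁻¹ * R ≤ 1 := by
  rcases hR.eq_or_lt with rfl | hR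
  · simp
  · exact (mul_le_mul_of_nonneg_right (min_le_right _ _) hR.le).trans_eq (inv_mul_cancel₀ hR.ne')

lemma LipschitzWith.abs_sub_le_of_mem_closedBall {X : Type*} [PseudoMetricSpace X] {f : X → ℝ}
    (hf : LipschitzWith 1 f) {m x : X} {R : ℝ} (hx : x ∈ closedBall m R) : |f x - f m| ≤ R := by
  simpa [Real.dist_eq] using (hf.dist_le_mul x m).trans (by simpa using hx)

lemma LipschitzWith.exists_flatTest_eqOn_closedBall {X : Type*} [PseudoMetricSpace X]
    {f : X → ℝ} (hf : LipschitzWith 1 f) {c R : ℝ} (hc₀ : 0 ≤ c) (hc₁ : c ≤ 1) (hcR : c * R ≤ 1)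
    (m : X) : ∃ ψ : X → ℝ, LipschitzWith 1 ψ ∧ (∀ x, |ψ x| ≤ 1) ∧
      EqOn ψ (fun x => c * (f x - f m)) (closedBall m R) := by
  have hg : LipschitzWith 1 fun x => c * (f x - f m) := by
    refine .of_dist_le_mul fun x y => ?_
    rw [Real.dist_eq, ← mul_sub, sub_sub_sub_cancel_right, abs_mul, abs_of_nonneg hc₀,
      NNReal.coe_one, one_mul, ← Real.dist_eq]
    exact (mul_le_of_le_one_left dist_nonneg hc₁).trans (by simpa using hf.dist_le_mul x y)
  have h1 : (-1 : ℝ) ≤ 1 := by norm_num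
  refine ⟨fun x => projIcc (-1) 1 h1 (c * (f x - f m)), ?_, fun x => abs_le.2 (projIcc _ _ h1 _).2,
    fun x hx => congrArg Subtype.val (projIcc_of_mem h1 (abs_le.1 ?_))⟩
  · simpa [Function.comp_def] using
      (LipschitzWith.subtype_val _).comp ((LipschitzWith.projIcc h1).comp hg)
  · rw [abs_mul, abs_of_nonneg hc₀]
    exact (mul_le_mul_of_nonneg_left (hf.abs_sub_le_of_mem_closedBall hx) hc₀).trans hcR

section

variable {X : Type*} [MeasurableSpace X]

lemma integral_eq_mul_integral_inv_smul (μ : Measure X) [IsFiniteMeasure μ] [NeZero μ]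
    (f : X → ℝ) : ∫ x, f x ∂μ = (μ univ).toReal * ∫ x, f x ∂((μ univ)⁻¹ • μ) := by
  rw [integral_smul_measure, ENNReal.toReal_inv, smul_eq_mul, mul_inv_cancel_left₀]
  exact ENNReal.toReal_ne_zero.2 ⟨NeZero.ne _, measure_ne_top _ _⟩

lemma abs_integral_le_measureReal_univ_of_abs_le_one {μ : Measure X} [IsFiniteMeasure μ]
    {f : X → ℝ} (hf : ∀ x, |f x| ≤ 1) : |∫ x, f x ∂μ| ≤ μ.real univ := by
  simpa using norm_integral_le_of_norm_le_const (μ := μ)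
    (Filter.Eventually.of_forall fun x => (Real.norm_eq_abs _).trans_le (hf x))

variable [PseudoMetricSpace X]

noncomputable def rhoDist (μ₁ μ₂ : Measure X) : ℝ :=
  min (μ₁ univ).toReal (μ₂ univ).toReal * W1 ((μ₁ univ)⁻¹ • μ₁) ((μ₂ univ)⁻¹ • μ₂) +
    |(μ₁ univ).toReal - (μ₂ univ).toReal|

instance : Nonempty {f : X → ℝ // LipschitzWith 1 f} := ⟨⟨fun _ => 0, .const' 0⟩⟩

instance : Nonempty {f : X → ℝ // LipschitzWith 1 f ∧ ∀ x, |f x| ≤ 1} :=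
  ⟨⟨fun _ => 0, .const' 0, by simp⟩⟩

lemma le_flatDist {μ₁ μ₂ : Measure X} [IsFiniteMeasure μ₁] [IsFiniteMeasure μ₂] {f : X → ℝ}
    (hf : LipschitzWith 1 f) (hf₁ : ∀ x, |f x| ≤ 1) :
    ∫ x, f x ∂μ₁ - ∫ x, f x ∂μ₂ ≤ flatDist μ₁ μ₂ := by
  refine le_ciSup (f := fun φ : {f : X → ℝ // LipschitzWith 1 f ∧ ∀ x, |f x| ≤ 1} =>
    ∫ x, φ.1 x ∂μ₁ - ∫ x, φ.1 x ∂μ₂) ⟨μ₁.real univ + μ₂.real univ, ?_⟩ ⟨f, hf, hf₁⟩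
  rintro _ ⟨φ, rfl⟩
  linarith [(abs_le.1 (abs_integral_le_measureReal_univ_of_abs_le_one (μ := μ₁) φ.2.2)).2,
    (abs_le.1 (abs_integral_le_measureReal_univ_of_abs_le_one (μ := μ₂) φ.2.2)).1]

lemma abs_toReal_measure_univ_sub_le_flatDist (μ₁ μ₂ : Measure X) [IsFiniteMeasure μ₁]
    [IsFiniteMeasure μ₂] : |(μ₁ univ).toReal - (μ₂ univ).toReal| ≤ flatDist μ₁ μ₂ := by
  have hone := le_flatDist (μ₁ := μ₁) (μ₂ := μ₂) (.const' 1) (fun _ => by norm_num)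
  have hneg := le_flatDist (μ₁ := μ₁) (μ₂ := μ₂) (.const' (-1)) (fun _ => by norm_num)
  simp only [integral_const, smul_eq_mul, mul_one, mul_neg, measureReal_def] at hone hneg
  exact abs_sub_le_iff.2 ⟨by linarith, by linarith⟩

variable [OpensMeasurableSpace X] {m : X} {R : ℝ}

lemma LipschitzWith.integrable_of_ae_mem_closedBall {μ : Measure X} [IsFiniteMeasure μ]
    (hμ : ∀ᵐ x ∂μ, x ∈ closedBall m R) {f : X → ℝ} (hf : LipschitzWith 1 f) : Integrable f μ := by
  refine .of_bound hf.continuous.aestronglyMeasurable (|f m| + R) ?_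
  filter_upwards [hμ] with x hx
  rw [Real.norm_eq_abs]
  linarith [abs_sub_abs_le_abs_sub (f x) (f m), hf.abs_sub_le_of_mem_closedBall hx]

lemma LipschitzWith.abs_integral_sub_le {ν : Measure X} [IsProbabilityMeasure ν]
    (hν : ∀ᵐ x ∂ν, x ∈ closedBall m R) {f : X → ℝ} (hf : LipschitzWith 1 f) :
    |∫ x, f x ∂ν - f m| ≤ R := by
  have hint : ∫ x, (f x - f m) ∂ν = ∫ x, f x ∂ν - f m := by
    rw [integral_sub (hf.integrable_of_ae_mem_closedBall hν) (integrable_const _)]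
    simp
  rw [← hint]
  simpa using norm_integral_le_of_norm_le_const
    (hν.mono fun x hx => (Real.norm_eq_abs _).trans_le (hf.abs_sub_le_of_mem_closedBall hx))

lemma le_W1 {ν₁ ν₂ : Measure X} [IsProbabilityMeasure ν₁] [IsProbabilityMeasure ν₂]
    (hν₁ : ∀ᵐ x ∂ν₁, x ∈ closedBall m R) (hν₂ : ∀ᵐ x ∂ν₂, x ∈ closedBall m R) {f : X → ℝ}
    (hf : LipschitzWith 1 f) : ∫ x, f x ∂ν₁ - ∫ x, f x ∂ν₂ ≤ W1 ν₁ ν₂ := by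
  refine le_ciSup (f := fun φ : {f : X → ℝ // LipschitzWith 1 f} =>
    ∫ x, φ.1 x ∂ν₁ - ∫ x, φ.1 x ∂ν₂) ⟨2 * R, ?_⟩ ⟨f, hf⟩
  rintro _ ⟨φ, rfl⟩
  linarith [(abs_le.1 (φ.2.abs_integral_sub_le hν₁)).2, (abs_le.1 (φ.2.abs_integral_sub_le hν₂)).1]

variable {μ₁ μ₂ : Measure X} [IsFiniteMeasure μ₁] [IsFiniteMeasure μ₂] [NeZero μ₁] [NeZero μ₂]

lemma flatDist_le_rhoDist (hμ₁ : ∀ᵐ x ∂μ₁, x ∈ closedBall m R)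
    (hμ₂ : ∀ᵐ x ∂μ₂, x ∈ closedBall m R) : flatDist μ₁ μ₂ ≤ rhoDist μ₁ μ₂ := by
  refine ciSup_le fun ⟨f, hf, hf₁⟩ => ?_
  dsimp only
  rw [integral_eq_mul_integral_inv_smul μ₁ f, integral_eq_mul_integral_inv_smul μ₂ f]
  have hW := le_W1 (Measure.ae_smul_measure hμ₁ (μ₁ univ)⁻¹)
    (Measure.ae_smul_measure hμ₂ (μ₂ univ)⁻¹) hf
  have hmin : 0 ≤ min (μ₁ univ).toReal (μ₂ univ).toReal :=
    le_min ENNReal.toReal_nonneg ENNReal.toReal_nonneg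
  have hI₁ := (abs_integral_le_measureReal_univ_of_abs_le_one
    (μ := (μ₁ univ)⁻¹ • μ₁) hf₁).trans_eq probReal_univ
  have hI₂ := (abs_integral_le_measureReal_univ_of_abs_le_one
    (μ := (μ₂ univ)⁻¹ • μ₂) hf₁).trans_eq probReal_univ
  have hmass := abs_mul_sub_mul_sub_min_mul_le (μ₁ univ).toReal (μ₂ univ).toReal hI₁ hI₂
  rw [rhoDist]
  linarith [(abs_le.1 hmass).2, mul_le_mul_of_nonneg_left hW hmin]

lemma mul_min_mul_integral_sub_le_flatDist_add (hμ₁ : ∀ᵐ x ∂μ₁, x ∈ closedBall m R)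
    (hμ₂ : ∀ᵐ x ∂μ₂, x ∈ closedBall m R) {c : ℝ} (hc₀ : 0 ≤ c) (hc₁ : c ≤ 1) (hcR : c * R ≤ 1)
    {f : X → ℝ} (hf : LipschitzWith 1 f) :
    c * (min (μ₁ univ).toReal (μ₂ univ).toReal *
        (∫ x, f x ∂((μ₁ univ)⁻¹ • μ₁) - ∫ x, f x ∂((μ₂ univ)⁻¹ • μ₂))) ≤
      flatDist μ₁ μ₂ + |(μ₁ univ).toReal - (μ₂ univ).toReal| := by
  obtain ⟨ψ, hψ, hψ₁, hψf⟩ := hf.exists_flatTest_eqOn_closedBall hc₀ hc₁ hcR m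
  have hν₁ := Measure.ae_smul_measure hμ₁ (μ₁ univ)⁻¹
  have hν₂ := Measure.ae_smul_measure hμ₂ (μ₂ univ)⁻¹
  have hψ_integral : ∀ (ν : Measure X) [IsProbabilityMeasure ν],
      (∀ᵐ x ∂ν, x ∈ closedBall m R) → ∫ x, ψ x ∂ν = c * (∫ x, f x ∂ν - f m) := by
    intro ν _ hν
    rw [integral_congr_ae (hν.mono hψf), integral_const_mul,
      integral_sub (hf.integrable_of_ae_mem_closedBall hν) (integrable_const _), integral_const,
      probReal_univ, one_smul]
  have hflat := le_flatDist (μ₁ := μ₁) (μ₂ := μ₂) hψ hψ₁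
  rw [integral_eq_mul_integral_inv_smul μ₁, integral_eq_mul_integral_inv_smul μ₂,
    hψ_integral _ hν₁, hψ_integral _ hν₂] at hflat
  have hmass := (abs_le.1 (abs_mul_sub_mul_sub_min_mul_le (μ₁ univ).toReal (μ₂ univ).toReal
    (hf.abs_integral_sub_le hν₁) (hf.abs_integral_sub_le hν₂))).1
  have hc_mass := mul_le_mul_of_nonneg_left hcR
    (abs_nonneg ((μ₁ univ).toReal - (μ₂ univ).toReal))
  have hc_diff := mul_le_mul_of_nonneg_left hmass hc₀
  linarith

lemma mul_min_mul_W1_le_flatDist_add (hμ₁ : ∀ᵐ x ∂μ₁, x ∈ closedBall m R)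
    (hμ₂ : ∀ᵐ x ∂μ₂, x ∈ closedBall m R) {c : ℝ} (hc₀ : 0 ≤ c) (hc₁ : c ≤ 1) (hcR : c * R ≤ 1) :
    c * (min (μ₁ univ).toReal (μ₂ univ).toReal * W1 ((μ₁ univ)⁻¹ • μ₁) ((μ₂ univ)⁻¹ • μ₂)) ≤
      flatDist μ₁ μ₂ + |(μ₁ univ).toReal - (μ₂ univ).toReal| := by
  rw [W1, Real.mul_iSup_of_nonneg (le_min ENNReal.toReal_nonneg ENNReal.toReal_nonneg),
    Real.mul_iSup_of_nonneg hc₀]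
  exact ciSup_le fun φ => mul_min_mul_integral_sub_le_flatDist_add hμ₁ hμ₂ hc₀ hc₁ hcR φ.2

lemma mul_rhoDist_le_three_mul_flatDist (hμ₁ : ∀ᵐ x ∂μ₁, x ∈ closedBall m R)
    (hμ₂ : ∀ᵐ x ∂μ₂, x ∈ closedBall m R) {c : ℝ} (hc₀ : 0 ≤ c) (hc₁ : c ≤ 1) (hcR : c * R ≤ 1) :
    c * rhoDist μ₁ μ₂ ≤ 3 * flatDist μ₁ μ₂ := by
  have hW := mul_min_mul_W1_le_flatDist_add hμ₁ hμ₂ hc₀ hc₁ hcR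
  have hmass := abs_toReal_measure_univ_sub_le_flatDist μ₁ μ₂
  have hc_mass := mul_le_of_le_one_left (abs_nonneg ((μ₁ univ).toReal - (μ₂ univ).toReal)) hc₁
  rw [rhoDist, mul_add]
  linarith

end

theorem flatDist_comparison_rho_general
    (μ₁ μ₂ : Measure ℝ) [IsFiniteMeasure μ₁] [IsFiniteMeasure μ₂]
    (h₁ : μ₁ Set.univ ≠ 0) (h₂ : μ₂ Set.univ ≠ 0)
    (a b : ℝ) (hab : a ≤ b)
    (hs₁ : ∀ s : Set ℝ, s ∩ Set.Icc a b = ∅ → μ₁ s = 0)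
    (hs₂ : ∀ s : Set ℝ, s ∩ Set.Icc a b = ∅ → μ₂ s = 0) :
    (1 / 3) * min 1 (2 / (b - a)) *
        (min (μ₁ Set.univ).toReal (μ₂ Set.univ).toReal *
            W1 ((μ₁ Set.univ)⁻¹ • μ₁) ((μ₂ Set.univ)⁻¹ • μ₂) +
          |(μ₁ Set.univ).toReal - (μ₂ Set.univ).toReal|)
      ≤ flatDist μ₁ μ₂ ∧
    flatDist μ₁ μ₂
      ≤ min (μ₁ Set.univ).toReal (μ₂ Set.univ).toReal *
            W1 ((μ₁ Set.univ)⁻¹ • μ₁) ((μ₂ Set.univ)⁻¹ • μ₂) +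
          |(μ₁ Set.univ).toReal - (μ₂ Set.univ).toReal| := by
  have : NeZero μ₁ := ⟨mt Measure.measure_univ_eq_zero.2 h₁⟩
  have : NeZero μ₂ := ⟨mt Measure.measure_univ_eq_zero.2 h₂⟩
  have hμ₁ : ∀ᵐ x ∂μ₁, x ∈ closedBall ((a + b) / 2) ((b - a) / 2) :=
    Real.Icc_eq_closedBall a b ▸ ae_iff.2 (hs₁ _ (compl_inter_self _))
  have hμ₂ : ∀ᵐ x ∂μ₂, x ∈ closedBall ((a + b) / 2) ((b - a) / 2) :=
    Real.Icc_eq_closedBall a b ▸ ae_iff.2 (hs₂ _ (compl_inter_self _))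
  have hcR := min_one_inv_mul_le_one (show 0 ≤ (b - a) / 2 by linarith)
  rw [inv_div] at hcR
  have hlower := mul_rhoDist_le_three_mul_flatDist hμ₁ hμ₂ (by positivity) (min_le_left _ _) hcR
  exact ⟨by rw [rhoDist] at hlower; linarith, flatDist_le_rhoDist hμ₁ hμ₂⟩

/-- Comparison between the flat metric and the auxiliary distance
`ρ(μ₁,μ₂) = min(M₁,M₂) W₁(μ₁/M₁, μ₂/M₂) + |M₁ − M₂|` on a bounded interval `K = [a,b]`. -/
theorem flatDist_comparison_rho
    (μ₁ μ₂ : Measure ℝ) [IsFiniteMeasure μ₁] [IsFiniteMeasure μ₂]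
    (h₁ : μ₁ Set.univ ≠ 0) (h₂ : μ₂ Set.univ ≠ 0)
    (a b : ℝ) (hab : a ≤ b) (ha : 0 ≤ a)
    (hs₁ : ∀ s : Set ℝ, s ∩ Set.Icc a b = ∅ → μ₁ s = 0)
    (hs₂ : ∀ s : Set ℝ, s ∩ Set.Icc a b = ∅ → μ₂ s = 0) :
    (1 / 3) * min 1 (2 / (b - a)) *
        (min (μ₁ Set.univ).toReal (μ₂ Set.univ).toReal *
            W1 ((μ₁ Set.univ)⁻¹ • μ₁) ((μ₂ Set.univ)⁻¹ • μ₂) +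
          |(μ₁ Set.univ).toReal - (μ₂ Set.univ).toReal|)
      ≤ flatDist μ₁ μ₂ ∧
    flatDist μ₁ μ₂
      ≤ min (μ₁ Set.univ).toReal (μ₂ Set.univ).toReal *
            W1 ((μ₁ Set.univ)⁻¹ • μ₁) ((μ₂ Set.univ)⁻¹ • μ₂) +
          |(μ₁ Set.univ).toReal - (μ₂ Set.univ).toReal| :=
  flatDist_comparison_rho_general μ₁ μ₂ h₁ h₂ a b hab hs₁ hs₂
end

section
/- Let (E,d) be a metric space and S : [0,T]×[0,T]×E → E a Lipschitz semiflow with constant L, i.e. S(0;τ) = Id, S(t+s;τ) = S(t;τ+s)∘S(s;τ), and d(S(t;τ)μ, S(s;τ)ν) ≤ L(d(μ,ν) + |t−s|). Then for every Lipschitz continuous curve t ↦ ν_t ∈ E on [0,T], the estimate d(ν_t, S(t;0)ν₀) ≤ L ∫₀ᵗ liminf_{h→0⁺} d(ν_{τ+h}, S(h;τ)ν_τ)/h dτ holds for all t ∈ [0,T]. -/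
/-!
Fix `t` and compare `ν_t` with the flow started from the curve at time `τ`:
`Φ(τ) = d(S(t-τ;τ)ν_τ, ν_t)` runs from `d(S(t;0)ν₀, ν_t)` at `τ = 0` to `0` at `τ = t`.
Writing `S(t-τ;τ) = S(t-τ-h;τ+h) ∘ S(h;τ)` and using the Lipschitz bound of `S(t-τ-h;τ+h)` gives
`Φ(τ) - Φ(τ+h) ≤ L d(ν_{τ+h}, S(h;τ)ν_τ)`. Hence `Φ` is Lipschitz, `-Φ'` is bounded by `L` times
the integrand wherever `Φ` is differentiable, and the fundamental theorem of calculus for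
absolutely continuous functions concludes. The integrand is measurable because the defect is
continuous in each variable separately, so the liminf may be taken along rational `h`.
-/

open MeasureTheory Filter Set Topology

theorem AbsolutelyContinuousOnInterval.sub_le_integral_of_deriv_le {f g : ℝ → ℝ} {a b : ℝ}
    (hab : a ≤ b) (hf : AbsolutelyContinuousOnInterval f a b) (hg : IntegrableOn g (Icc a b))
    (hle : ∀ x ∈ Ioo a b, DifferentiableAt ℝ f x → deriv f x ≤ g x) :
    f b - f a ≤ ∫ x in Icc a b, g x := by
  rw [← hf.integral_deriv_eq_sub, intervalIntegral.integral_of_le hab,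
    integral_Icc_eq_integral_Ioo, integral_Ioc_eq_integral_Ioo]
  refine setIntegral_mono_ae_restrict
    ((intervalIntegrable_iff_integrableOn_Ioo_of_le hab).1 hf.intervalIntegrable_deriv)
    (hg.mono_set Ioo_subset_Icc_self) ?_
  filter_upwards [ae_restrict_mem measurableSet_Ioo, ae_restrict_of_ae hf.ae_differentiableAt]
    with x hx hdiff
  exact hle x hx (hdiff (uIcc_of_le hab ▸ Ioo_subset_Icc_self hx))

theorem HasDerivAt.le_liminf_of_eventually_slope_le {f u : ℝ → ℝ} {f' x : ℝ}
    (hf : HasDerivAt f f' x) (hle : ∀ᶠ h in 𝓝[>] 0, (f (x + h) - f x) / h ≤ u h)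
    (hu : IsCoboundedUnder (· ≥ ·) (𝓝[>] 0) u) : f' ≤ liminf u (𝓝[>] 0) := by
  have hslope : Tendsto (fun h => (f (x + h) - f x) / h) (𝓝[>] 0) (𝓝 f') := by
    simpa only [smul_eq_mul, inv_mul_eq_div] using hf.tendsto_slope_zero_right
  rw [← hslope.liminf_eq]
  exact liminf_le_liminf hle hslope.isBoundedUnder_ge hu

theorem liminf_nhdsGT_eq_liminf_rat {u : ℝ → ℝ} {a b : ℝ} (hab : a < b)
    (hu : ContinuousOn u (Ioo a b)) :
    liminf u (𝓝[>] a) = liminf (fun q : ℚ => u q) (comap (↑) (𝓝[>] a)) := by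
  simp only [liminf_eq]
  congr 1
  ext c
  refine ⟨fun (h : ∀ᶠ x in 𝓝[>] a, c ≤ u x) => h.comap _, fun h => ?_⟩
  obtain ⟨t, ht, hts⟩ := mem_comap.1 h
  obtain ⟨b', hab', hb't⟩ := mem_nhdsGT_iff_exists_Ioo_subset.1 ht
  filter_upwards [Ioo_mem_nhdsGT (lt_min hab hab')] with x hx
  have hxb : Ioo a (min b b') ∈ 𝓝 x := isOpen_Ioo.mem_nhds hx
  have hux : ContinuousAt u x :=
    hu.continuousAt (mem_of_superset hxb (Ioo_subset_Ioo_right (min_le_left b b')))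
  have := Rat.isDenseEmbedding_coe_real.toIsDenseInducing.comap_nhds_neBot x
  refine ge_of_tendsto (hux.tendsto.comp (tendsto_comap (f := ((↑) : ℚ → ℝ)))) ?_
  filter_upwards [tendsto_comap.eventually hxb] with q hq
  exact hts (hb't (Ioo_subset_Ioo_right (min_le_right b b') hq))

theorem continuousOn_of_dist_le_mul_sub {X : Type*} [PseudoMetricSpace X] {f : ℝ → X}
    {s : Set ℝ} {r C : ℝ} (hr : 0 < r)
    (h : ∀ x ∈ s, ∀ y ∈ s, x ≤ y → y - x < r → dist (f y) (f x) ≤ C * (y - x)) :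
    ContinuousOn f s := by
  refine LocallyLipschitzOn.continuousOn fun x hx => ⟨C.toNNReal, s ∩ Metric.ball x (r / 2),
    inter_mem_nhdsWithin s (Metric.ball_mem_nhds x (half_pos hr)), ?_⟩
  refine LipschitzOnWith.of_dist_le_mul fun y hy z hz => ?_
  wlog hyz : y ≤ z generalizing y z
  · rw [dist_comm, dist_comm y]
    exact this z hz y hy (le_of_not_ge hyz)
  have hzy : z - y < r := by
    have := dist_triangle_right y z x
    rw [Real.dist_eq, abs_of_nonpos (by linarith)] at this
    linarith [Metric.mem_ball.1 hy.2, Metric.mem_ball.1 hz.2]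
  rw [dist_comm, Real.dist_eq, abs_of_nonpos (by linarith), neg_sub]
  exact (h y hy.1 z hz.1 hyz hzy).trans
    (mul_le_mul_of_nonneg_right (Real.le_coe_toNNReal C) (by linarith))

structure IsLipschitzSemiflow {E : Type*} [MetricSpace E] (T L : ℝ) (S : ℝ → ℝ → E → E) :
    Prop where
  map_zero : ∀ τ ∈ Icc (0:ℝ) T, ∀ μ : E, S 0 τ μ = μ
  map_add : ∀ s t τ : ℝ, 0 ≤ s → 0 ≤ t → τ ∈ Icc (0:ℝ) T →
    τ + s ∈ Icc (0:ℝ) T → τ + s + t ∈ Icc (0:ℝ) T →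
    ∀ μ : E, S (t + s) τ μ = S t (τ + s) (S s τ μ)
  dist_le : ∀ s t τ : ℝ, 0 ≤ s → 0 ≤ t → τ ∈ Icc (0:ℝ) T →
    τ + s ∈ Icc (0:ℝ) T → τ + t ∈ Icc (0:ℝ) T →
    ∀ μ ν : E, dist (S t τ μ) (S s τ ν) ≤ L * (dist μ ν + |t - s|)

def semiflowDefect {E : Type*} [MetricSpace E] (S : ℝ → ℝ → E → E) (ν : ℝ → E) (τ h : ℝ) : ℝ :=
  dist (ν (τ + h)) (S h τ (ν τ))

noncomputable def semiflowDefectRate {E : Type*} [MetricSpace E] (S : ℝ → ℝ → E → E)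
    (ν : ℝ → E) (τ : ℝ) : ℝ :=
  liminf (fun h => semiflowDefect S ν τ h / h) (𝓝[>] 0)

namespace IsLipschitzSemiflow

variable {E : Type*} [MetricSpace E] {T L : ℝ} {S : ℝ → ℝ → E → E} {ν : ℝ → E} {K : NNReal}
  {τ σ θ h t x : ℝ}

theorem dist_map_le (hS : IsLipschitzSemiflow T L S) {s t : ℝ} (hτ : 0 ≤ τ) (hs : 0 ≤ s)
    (ht : 0 ≤ t) (hsT : τ + s ≤ T) (htT : τ + t ≤ T) (μ μ' : E) :
    dist (S t τ μ) (S s τ μ') ≤ L * (dist μ μ' + |t - s|) :=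
  hS.dist_le s t τ hs ht ⟨hτ, by linarith⟩ ⟨by linarith, hsT⟩ ⟨by linarith, htT⟩ μ μ'

theorem lipschitzOnWith_map_time (hS : IsLipschitzSemiflow T L S) (hτ : 0 ≤ τ) (μ : E) :
    LipschitzOnWith L.toNNReal (fun h => S h τ μ) (Icc 0 (T - τ)) := by
  refine LipschitzOnWith.of_dist_le_mul fun h hh k hk => ?_
  refine (hS.dist_map_le hτ hk.1 hh.1 (by linarith [hk.2]) (by linarith [hh.2]) μ μ).trans ?_
  rw [dist_self, zero_add, ← Real.dist_eq]
  exact mul_le_mul_of_nonneg_right (Real.le_coe_toNNReal L) dist_nonneg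

theorem dist_map_self_le (hS : IsLipschitzSemiflow T L S) (hτ : 0 ≤ τ) (hh : 0 ≤ h)
    (hτh : τ + h ≤ T) (μ : E) : dist (S h τ μ) μ ≤ L * h := by
  have := hS.dist_map_le hτ le_rfl hh (by linarith) hτh μ μ
  rwa [hS.map_zero τ ⟨hτ, by linarith⟩, dist_self, zero_add, sub_zero, abs_of_nonneg hh] at this

theorem map_sub_eq (hS : IsLipschitzSemiflow T L S) (hτ : 0 ≤ τ) (hτσ : τ ≤ σ) (hσθ : σ ≤ θ)
    (hθ : θ ≤ T) (μ : E) : S (θ - τ) τ μ = S (θ - σ) σ (S (σ - τ) τ μ) := by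
  have := hS.map_add (σ - τ) (θ - σ) τ (by linarith) (by linarith) ⟨hτ, by linarith⟩
    ⟨by linarith, by linarith⟩ ⟨by linarith, by linarith⟩ μ
  rwa [sub_add_sub_cancel, add_sub_cancel] at this

theorem semiflowDefect_le (hS : IsLipschitzSemiflow T L S) (hν : LipschitzOnWith K ν (Icc 0 T))
    (hτ : 0 ≤ τ) (hh : 0 ≤ h) (hτh : τ + h ≤ T) : semiflowDefect S ν τ h ≤ (K + L) * h := by
  have hcurve : dist (ν (τ + h)) (ν τ) ≤ K * h := by
    have := hν.dist_le_mul (τ + h) ⟨by linarith, hτh⟩ τ ⟨hτ, by linarith⟩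
    rwa [Real.dist_eq, add_sub_cancel_left, abs_of_nonneg hh] at this
  calc semiflowDefect S ν τ h ≤ dist (ν (τ + h)) (ν τ) + dist (S h τ (ν τ)) (ν τ) :=
        dist_triangle_right _ _ _
    _ ≤ K * h + L * h := add_le_add hcurve (hS.dist_map_self_le hτ hh hτh _)
    _ = (K + L) * h := by ring

theorem continuousOn_semiflowDefect_time (hS : IsLipschitzSemiflow T L S)
    (hν : LipschitzOnWith K ν (Icc 0 T)) (hτ : 0 ≤ τ) :
    ContinuousOn (semiflowDefect S ν τ) (Icc 0 (T - τ)) := by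
  have hshift : MapsTo (τ + ·) (Icc 0 (T - τ)) (Icc 0 T) :=
    fun h hh => ⟨by linarith [hh.1], by linarith [hh.2]⟩
  exact continuous_dist.comp_continuousOn ((hν.continuousOn.comp (by fun_prop) hshift).prodMk
    (hS.lipschitzOnWith_map_time hτ (ν τ)).continuousOn)

-- Splitting `S(q;τ) = S(τ+q-σ;σ) ∘ S(σ-τ;τ)` reduces the comparison to the defect at `τ`.
theorem dist_map_curve_le (hS : IsLipschitzSemiflow T L S) (hν : LipschitzOnWith K ν (Icc 0 T))
    (hL : 0 ≤ L) {q : ℝ} (hτ : 0 ≤ τ) (hτσ : τ ≤ σ) (hσq : σ ≤ τ + q) (hσT : σ + q ≤ T) :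
    dist (S q σ (ν σ)) (S q τ (ν τ)) ≤ L * (K + L + 1) * (σ - τ) := by
  have hsplit := hS.map_sub_eq (μ := ν τ) hτ hτσ (by linarith : σ ≤ τ + q) (by linarith)
  rw [add_sub_cancel_left] at hsplit
  have hdefect := hS.semiflowDefect_le hν hτ (sub_nonneg.2 hτσ) (by linarith)
  rw [semiflowDefect, add_sub_cancel] at hdefect
  rw [hsplit]
  calc dist (S q σ (ν σ)) (S (τ + q - σ) σ (S (σ - τ) τ (ν τ)))
      ≤ L * (dist (ν σ) (S (σ - τ) τ (ν τ)) + |q - (τ + q - σ)|) :=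
        hS.dist_map_le (by linarith) (by linarith) (by linarith) (by linarith) hσT _ _
    _ ≤ L * ((K + L) * (σ - τ) + (σ - τ)) := by
        rw [show q - (τ + q - σ) = σ - τ by ring, abs_of_nonneg (by linarith)]
        gcongr
    _ = L * (K + L + 1) * (σ - τ) := by ring

theorem continuousOn_map_curve (hS : IsLipschitzSemiflow T L S)
    (hν : LipschitzOnWith K ν (Icc 0 T)) (hL : 0 ≤ L) {q : ℝ} (hq : 0 < q) :
    ContinuousOn (fun τ => S q τ (ν τ)) (Icc 0 (T - q)) :=
  continuousOn_of_dist_le_mul_sub hq fun τ hτ σ hσ hτσ hστ =>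
    hS.dist_map_curve_le hν hL hτ.1 hτσ (by linarith) (by linarith [hσ.2])

theorem continuousOn_semiflowDefect_base (hS : IsLipschitzSemiflow T L S)
    (hν : LipschitzOnWith K ν (Icc 0 T)) (hL : 0 ≤ L) {q : ℝ} (hq : 0 < q) :
    ContinuousOn (fun τ => semiflowDefect S ν τ q) (Icc 0 (T - q)) := by
  have hshift : MapsTo (· + q) (Icc 0 (T - q)) (Icc 0 T) :=
    fun τ hτ => ⟨by linarith [hτ.1], by linarith [hτ.2]⟩
  exact continuous_dist.comp_continuousOn ((hν.continuousOn.comp (by fun_prop) hshift).prodMk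
    (hS.continuousOn_map_curve hν hL hq))

theorem eventually_semiflowDefect_div_mem_Icc (hS : IsLipschitzSemiflow T L S)
    (hν : LipschitzOnWith K ν (Icc 0 T)) (hτ : τ ∈ Ico 0 T) :
    ∀ᶠ h in 𝓝[>] 0, semiflowDefect S ν τ h / h ∈ Icc 0 (K + L) := by
  filter_upwards [Ioo_mem_nhdsGT (sub_pos.2 hτ.2)] with h hh
  refine ⟨div_nonneg dist_nonneg hh.1.le, (div_le_iff₀ hh.1).2 ?_⟩
  exact hS.semiflowDefect_le hν hτ.1 hh.1.le (by linarith [hh.2])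

theorem semiflowDefectRate_mem_Icc (hS : IsLipschitzSemiflow T L S)
    (hν : LipschitzOnWith K ν (Icc 0 T)) (hτ : τ ∈ Ico 0 T) :
    semiflowDefectRate S ν τ ∈ Icc 0 (K + L) := by
  have hmem := hS.eventually_semiflowDefect_div_mem_Icc hν hτ
  exact ⟨le_liminf_of_le
      (isBoundedUnder_of_eventually_le (hmem.mono fun _ h => h.2)).isCoboundedUnder_ge
      (hmem.mono fun _ h => h.1),
    liminf_le_of_frequently_le (hmem.mono fun _ h => h.2).frequently
      (isBoundedUnder_of_eventually_ge (hmem.mono fun _ h => h.1))⟩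

-- Along rational times `h`, truncated to the admissible range so that each term is measurable.
theorem semiflowDefectRate_eq_liminf_rat (hS : IsLipschitzSemiflow T L S)
    (hν : LipschitzOnWith K ν (Icc 0 T)) (hτ : τ ∈ Ico 0 T) :
    semiflowDefectRate S ν τ = liminf (fun q : ℚ => if (0 : ℝ) < q then
      (Icc 0 (T - q)).piecewise (fun σ => semiflowDefect S ν σ q / q) 0 τ else 0)
      (comap ((↑) : ℚ → ℝ) (𝓝[>] 0)) := by
  have hcont : ContinuousOn (fun h => semiflowDefect S ν τ h / h) (Ioo 0 (T - τ)) :=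
    ((hS.continuousOn_semiflowDefect_time hν hτ.1).mono Ioo_subset_Icc_self).div continuousOn_id
      fun h hh => hh.1.ne'
  rw [semiflowDefectRate, liminf_nhdsGT_eq_liminf_rat (sub_pos.2 hτ.2) hcont]
  refine liminf_congr ?_
  filter_upwards [preimage_mem_comap (Ioo_mem_nhdsGT (sub_pos.2 hτ.2))] with q hq
  have hτq : τ ∈ Icc 0 (T - q) := ⟨hτ.1, by linarith [hq.2]⟩
  rw [if_pos hq.1, piecewise_eq_of_mem _ _ _ hτq]

theorem aestronglyMeasurable_semiflowDefectRate (hS : IsLipschitzSemiflow T L S)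
    (hν : LipschitzOnWith K ν (Icc 0 T)) (hL : 0 ≤ L) :
    AEStronglyMeasurable (semiflowDefectRate S ν) (volume.restrict (Ico 0 T)) := by
  obtain ⟨s, hs⟩ := (comap ((↑) : ℚ → ℝ) (𝓝[>] 0)).exists_antitone_basis
  have hmeas : ∀ q : ℚ, Measurable fun τ => if (0 : ℝ) < q then
      (Icc 0 (T - q)).piecewise (fun σ => semiflowDefect S ν σ q / q) 0 τ else 0 := by
    intro q
    by_cases hq : (0 : ℝ) < q
    · simp only [if_pos hq]
      exact ((hS.continuousOn_semiflowDefect_base hν hL hq).div_const _).measurable_piecewise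
        continuousOn_const measurableSet_Icc
    · simp only [if_neg hq, measurable_const]
  refine (Measurable.liminf' hmeas ⟨hs.toHasBasis, to_countable _⟩
    (fun _ => to_countable _)).aestronglyMeasurable.congr ?_
  filter_upwards [ae_restrict_mem measurableSet_Ico] with τ hτ
  exact (hS.semiflowDefectRate_eq_liminf_rat hν hτ).symm

theorem integrableOn_semiflowDefectRate (hS : IsLipschitzSemiflow T L S)
    (hν : LipschitzOnWith K ν (Icc 0 T)) (hL : 0 ≤ L) :
    IntegrableOn (semiflowDefectRate S ν) (Ico 0 T) := by
  refine Integrable.mono' (integrable_const ((K : ℝ) + L))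
    (hS.aestronglyMeasurable_semiflowDefectRate hν hL) ?_
  filter_upwards [ae_restrict_mem measurableSet_Ico] with τ hτ
  have hbound := hS.semiflowDefectRate_mem_Icc hν hτ
  rw [Real.norm_of_nonneg hbound.1]
  exact hbound.2

theorem abs_dist_map_sub_dist_map_le (hS : IsLipschitzSemiflow T L S) (hτ : 0 ≤ τ)
    (hτσ : τ ≤ σ) (hσt : σ ≤ t) (htT : t ≤ T) :
    |dist (S (t - σ) σ (ν σ)) (ν t) - dist (S (t - τ) τ (ν τ)) (ν t)|
      ≤ L * semiflowDefect S ν τ (σ - τ) := by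
  rw [hS.map_sub_eq hτ hτσ hσt htT, semiflowDefect, add_sub_cancel]
  refine (abs_dist_sub_le _ _ _).trans ?_
  simpa using hS.dist_map_le (by linarith) (sub_nonneg.2 hσt) (sub_nonneg.2 hσt)
    (by linarith) (by linarith) (ν σ) (S (σ - τ) τ (ν τ))

theorem lipschitzOnWith_dist_map (hS : IsLipschitzSemiflow T L S)
    (hν : LipschitzOnWith K ν (Icc 0 T)) (hL : 0 ≤ L) (htT : t ≤ T) :
    LipschitzOnWith (L * (K + L)).toNNReal (fun τ => dist (S (t - τ) τ (ν τ)) (ν t))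
      (Icc 0 t) := by
  refine LipschitzOnWith.of_dist_le_mul fun σ hσ τ hτ => ?_
  wlog hτσ : τ ≤ σ generalizing σ τ
  · rw [dist_comm, dist_comm σ]
    exact this τ hτ σ hσ (le_of_not_ge hτσ)
  rw [Real.dist_eq, Real.dist_eq σ, abs_of_nonneg (sub_nonneg.2 hτσ)]
  calc _ ≤ L * semiflowDefect S ν τ (σ - τ) :=
        hS.abs_dist_map_sub_dist_map_le hτ.1 hτσ hσ.2 htT
    _ ≤ L * ((K + L) * (σ - τ)) := by
        gcongr
        exact hS.semiflowDefect_le hν hτ.1 (sub_nonneg.2 hτσ) (by linarith [hσ.2])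
    _ ≤ _ := by
        rw [← mul_assoc]
        exact mul_le_mul_of_nonneg_right (Real.le_coe_toNNReal _) (sub_nonneg.2 hτσ)

theorem deriv_neg_dist_map_le (hS : IsLipschitzSemiflow T L S)
    (hν : LipschitzOnWith K ν (Icc 0 T)) (hL : 0 ≤ L) (htT : t ≤ T) (hx : x ∈ Ioo 0 t)
    (hdiff : DifferentiableAt ℝ (fun τ => -dist (S (t - τ) τ (ν τ)) (ν t)) x) :
    deriv (fun τ => -dist (S (t - τ) τ (ν τ)) (ν t)) x ≤ L * semiflowDefectRate S ν x := by
  have hmem := hS.eventually_semiflowDefect_div_mem_Icc hν ⟨hx.1.le, hx.2.trans_le htT⟩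
  have hbdd : IsBoundedUnder (· ≤ ·) (𝓝[>] 0) fun h => L * (semiflowDefect S ν x h / h) :=
    isBoundedUnder_of_eventually_le (hmem.mono fun _ hh => mul_le_mul_of_nonneg_left hh.2 hL)
  rw [semiflowDefectRate, (monotone_mul_left_of_nonneg hL).map_liminf_of_continuousAt _
    (continuous_const_mul L).continuousAt
    (isBoundedUnder_of_eventually_le (hmem.mono fun _ hh => hh.2)).isCoboundedUnder_ge
    (isBoundedUnder_of_eventually_ge (hmem.mono fun _ hh => hh.1))]
  refine hdiff.hasDerivAt.le_liminf_of_eventually_slope_le ?_ hbdd.isCoboundedUnder_ge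
  filter_upwards [Ioo_mem_nhdsGT (sub_pos.2 hx.2)] with h hh
  have hstep := hS.abs_dist_map_sub_dist_map_le (ν := ν) hx.1.le
    (le_add_of_nonneg_right hh.1.le) (by linarith [hh.2]) htT
  rw [add_sub_cancel_left] at hstep
  rw [Function.comp_apply, ← mul_div_assoc, div_le_div_iff_of_pos_right hh.1]
  linarith [neg_abs_le (dist (S (t - (x + h)) (x + h) (ν (x + h))) (ν t)
    - dist (S (t - x) x (ν x)) (ν t))]

theorem dist_le_integral_semiflowDefectRate (hS : IsLipschitzSemiflow T L S)
    (hν : LipschitzOnWith K ν (Icc 0 T)) (hL : 0 ≤ L) (ht : t ∈ Icc 0 T) :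
    dist (ν t) (S t 0 (ν 0)) ≤ L * ∫ τ in Icc 0 t, semiflowDefectRate S ν τ := by
  have hac : AbsolutelyContinuousOnInterval (fun τ => -dist (S (t - τ) τ (ν τ)) (ν t)) 0 t :=
    (uIcc_of_le ht.1 ▸ hS.lipschitzOnWith_dist_map hν hL ht.2).absolutelyContinuousOnInterval.neg
  have hint : IntegrableOn (fun τ => L * semiflowDefectRate S ν τ) (Icc 0 t) :=
    ((integrableOn_Icc_iff_integrableOn_Ico).2
      ((hS.integrableOn_semiflowDefectRate hν hL).mono_set (Ico_subset_Ico_right ht.2))).const_mul L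
  have hftc := hac.sub_le_integral_of_deriv_le ht.1 hint
    fun x hx hdiff => hS.deriv_neg_dist_map_le hν hL ht.2 hx hdiff
  rw [integral_const_mul, sub_self, sub_zero, hS.map_zero t ht, dist_self, dist_comm] at hftc
  linarith

end IsLipschitzSemiflow

theorem lipschitz_semiflow_tangential_inequality_general
    {E : Type*} [MetricSpace E] (T L : ℝ) (hL : 0 ≤ L)
    (S : ℝ → ℝ → E → E)
    (hid : ∀ τ ∈ Set.Icc (0:ℝ) T, ∀ μ : E, S 0 τ μ = μ)
    (hsemi : ∀ s t τ : ℝ, 0 ≤ s → 0 ≤ t → τ ∈ Set.Icc (0:ℝ) T →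
      τ + s ∈ Set.Icc (0:ℝ) T → τ + s + t ∈ Set.Icc (0:ℝ) T →
      ∀ μ : E, S (t + s) τ μ = S t (τ + s) (S s τ μ))
    (hlip : ∀ s t τ : ℝ, 0 ≤ s → 0 ≤ t → τ ∈ Set.Icc (0:ℝ) T →
      τ + s ∈ Set.Icc (0:ℝ) T → τ + t ∈ Set.Icc (0:ℝ) T →
      ∀ μ ν : E, dist (S t τ μ) (S s τ ν) ≤ L * (dist μ ν + |t - s|))
    (ν : ℝ → E) (K : NNReal) (hν : LipschitzOnWith K ν (Set.Icc (0:ℝ) T)) :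
    ∀ t ∈ Set.Icc (0:ℝ) T,
      dist (ν t) (S t 0 (ν 0))
        ≤ L * ∫ τ in Set.Icc (0:ℝ) t,
            liminf (fun h : ℝ => dist (ν (τ + h)) (S h τ (ν τ)) / h)
              (nhdsWithin 0 (Set.Ioi (0:ℝ))) :=
  fun _ ht => (IsLipschitzSemiflow.mk hid hsemi hlip).dist_le_integral_semiflowDefectRate hν hL ht

/-- Tangential (error) inequality for a Lipschitz semiflow `S(t;τ)` on a metric space:
for any Lipschitz curve `ν`,
`d(ν_t, S(t;0)ν₀) ≤ L ∫₀ᵗ liminf_{h→0⁺} d(ν_{τ+h}, S(h;τ)ν_τ)/h dτ`. -/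
theorem lipschitz_semiflow_tangential_inequality
    {E : Type*} [MetricSpace E] (T L : ℝ) (hT : 0 ≤ T) (hL : 0 ≤ L)
    (S : ℝ → ℝ → E → E)
    (hid : ∀ τ ∈ Set.Icc (0:ℝ) T, ∀ μ : E, S 0 τ μ = μ)
    (hsemi : ∀ s t τ : ℝ, 0 ≤ s → 0 ≤ t → τ ∈ Set.Icc (0:ℝ) T →
      τ + s ∈ Set.Icc (0:ℝ) T → τ + s + t ∈ Set.Icc (0:ℝ) T →
      ∀ μ : E, S (t + s) τ μ = S t (τ + s) (S s τ μ))
    (hlip : ∀ s t τ : ℝ, 0 ≤ s → 0 ≤ t → τ ∈ Set.Icc (0:ℝ) T →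
      τ + s ∈ Set.Icc (0:ℝ) T → τ + t ∈ Set.Icc (0:ℝ) T →
      ∀ μ ν : E, dist (S t τ μ) (S s τ ν) ≤ L * (dist μ ν + |t - s|))
    (ν : ℝ → E) (K : NNReal) (hν : LipschitzOnWith K ν (Set.Icc (0:ℝ) T)) :
    ∀ t ∈ Set.Icc (0:ℝ) T,
      dist (ν t) (S t 0 (ν 0))
        ≤ L * ∫ τ in Set.Icc (0:ℝ) t,
            liminf (fun h : ℝ => dist (ν (τ + h)) (S h τ (ν τ)) / h)
              (nhdsWithin 0 (Set.Ioi (0:ℝ))) :=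
  lipschitz_semiflow_tangential_inequality_general T L hL S hid hsemi hlip ν K hν
end
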